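/- Let α > 0, p ≥ 1, q ≥ 1 with 1/p + 1/q ≤ 1 + α (and p ≠ 1, q ≠ 1 in the case 1/p + 1/q = 1 + α). If f ∈ L_p(a,b) and g ∈ L_q(a,b), then ∫_a^b f(x)·(^{RL}_{a,1}I^α g)(x) dx = ∫_a^b g(x)·(^{RL}I^α_{b,1} f)(x) dx. -/

import Mathlib

/-!
Both sides equal `Γ(α)⁻¹ ∬_{s<x} f(x) g(s) (x - s)^(α-1)`, so the identity is Fubini once
`f(x) g(s) (x - s)₊^(α-1)` is integrable on `(a,b)²`. For `α ≥ 1` the kernel is bounded and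
`f, g ∈ L¹`. For `α < 1` the kernel satisfies `∫_B k(x - ·) ≤ C |B|^α` for every set `B`. Split the
square according to whether `|g(s)|^q ≤ |f(x)|^p` or the reverse; the two pieces are exchanged by
swapping `(f, p)` with `(g, q)`. On the first piece `|g(s)| ≤ w := |f(x)|^(p/q)`, so by the layer
cake formula the inner integral is at most `C |f(x)| ∫_0^w |{|g| > d}|^α dd`, and Chebyshev bounds
`|{|g| > d}|` by `min(b - a, d^(-q) ‖g‖_q^q)`. If `qα > 1` the `d`-integral converges on `(0, ∞)`.
Otherwise `p > 1`, and for some `α' ≤ α` with `qα' < 1` and `1/p + 1/q ≤ 1 + α'` it is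
`O(w^(1 - qα'))`, which leaves `|f(x)|^t` with `t = 1 + p/q - pα' ≤ p`.
-/

open MeasureTheory Set intervalIntegral

/-- Mittag-Leffler function of parameter `β`: `E_β(z) = Σ_{j≥0} z^j / Γ(βj+1)`. -/
noncomputable def mlE (β z : ℝ) : ℝ := ∑' j : ℕ, z ^ j / Real.Gamma (β * j + 1)

/-- Left weighted Riemann–Liouville fractional integral of order `γ`:
`(1/Γ(γ)) (1/w(x)) ∫_a^x (x−s)^{γ−1} w(s) f(s) ds`. -/
noncomputable def rlIL (a : ℝ) (w : ℝ → ℝ) (γ : ℝ) (f : ℝ → ℝ) (x : ℝ) : ℝ :=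
  (1 / Real.Gamma γ) * (1 / w x) * ∫ s in a..x, (x - s) ^ (γ - 1) * w s * f s

/-- Right weighted Riemann–Liouville fractional integral of order `γ`:
`(1/Γ(γ)) (1/w(x)) ∫_x^b (s−x)^{γ−1} w(s) f(s) ds`. -/
noncomputable def rlIR (b : ℝ) (w : ℝ → ℝ) (γ : ℝ) (f : ℝ → ℝ) (x : ℝ) : ℝ :=
  (1 / Real.Gamma γ) * (1 / w x) * ∫ s in x..b, (s - x) ^ (γ - 1) * w s * f s

/-- Left weighted generalized fractional integral
`(_{a,w}I^{α,β} f)(x) = φ(α) f(x) + ψ(α) (^{RL}_{a,w}I^β f)(x)`,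
with `φ(α) = (1−α)/B(α)` and `ψ(α) = α/B(α)`. -/
noncomputable def genIL (a : ℝ) (w B : ℝ → ℝ) (α β : ℝ) (f : ℝ → ℝ) (x : ℝ) : ℝ :=
  ((1 - α) / B α) * f x + (α / B α) * rlIL a w β f x

/-- Right weighted generalized fractional integral
`(I^{α,β}_{b,w} f)(x) = φ(α) f(x) + ψ(α) (^{RL}I^β_{b,w} f)(x)`. -/
noncomputable def genIR (b : ℝ) (w B : ℝ → ℝ) (α β : ℝ) (f : ℝ → ℝ) (x : ℝ) : ℝ :=
  ((1 - α) / B α) * f x + (α / B α) * rlIR b w β f x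

/-- Left weighted generalized fractional derivative in the Riemann–Liouville sense:
`(1/φ(α)) (1/w(x)) d/dx ∫_a^x w(s) f(s) E_β(−μ_α (x−s)^β) ds`, `μ_α = α/(1−α)`. -/
noncomputable def genDL (a : ℝ) (w B : ℝ → ℝ) (α β : ℝ) (f : ℝ → ℝ) (x : ℝ) : ℝ :=
  (1 / ((1 - α) / B α)) * (1 / w x) *
    deriv (fun y => ∫ s in a..y, w s * f s * mlE β (-(α / (1 - α)) * (y - s) ^ β)) x

/-- Right weighted generalized fractional derivative in the Riemann–Liouville sense:
`(−1/φ(α)) (1/w(x)) d/dx ∫_x^b w(s) f(s) E_β(−μ_α (s−x)^β) ds`. -/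
noncomputable def genDR (b : ℝ) (w B : ℝ → ℝ) (α β : ℝ) (f : ℝ → ℝ) (x : ℝ) : ℝ :=
  (-1 / ((1 - α) / B α)) * (1 / w x) *
    deriv (fun y => ∫ s in y..b, w s * f s * mlE β (-(α / (1 - α)) * (s - y) ^ β)) x

/-- `f` is absolutely continuous on `[a,b]`: it is an indefinite integral of an
integrable function. -/
def AbsCont (a b : ℝ) (f : ℝ → ℝ) : Prop :=
  ∃ f' : ℝ → ℝ, IntegrableOn f' (Icc a b) ∧ ∀ x ∈ Icc a b, f x = f a + ∫ t in a..x, f' t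

open scoped ENNReal

lemma lintegral_Ioo_ofReal_rpow {γ : ℝ} (hγ : -1 < γ) {T : ℝ} (hT : 0 ≤ T) :
    ∫⁻ t in Ioo 0 T, ENNReal.ofReal (t ^ γ) = ENNReal.ofReal (T ^ (γ + 1) / (γ + 1)) := by
  have hint : IntegrableOn (fun t : ℝ => t ^ γ) (Ioo 0 T) :=
    (intervalIntegrable_rpow' (a := 0) (b := T) hγ).1.mono_set Ioo_subset_Ioc_self
  rw [← ofReal_integral_eq_lintegral_ofReal hint
    ((ae_restrict_iff' measurableSet_Ioo).2 (.of_forall fun t ht => by positivity [ht.1])),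
    integral_Ioc_eq_integral_Ioo.symm, ← integral_of_le hT, integral_rpow (Or.inl hγ),
    Real.zero_rpow (by linarith), sub_zero]

lemma lintegral_Ioi_ofReal_rpow {γ : ℝ} (hγ : γ < -1) :
    ∫⁻ t in Ioi 1, ENNReal.ofReal (t ^ γ) = ENNReal.ofReal (-1 / (γ + 1)) := by
  rw [← ofReal_integral_eq_lintegral_ofReal (integrableOn_Ioi_rpow_of_lt hγ one_pos)
    ((ae_restrict_iff' measurableSet_Ioi).2 (.of_forall fun t (ht : 1 < t) => by positivity)),
    integral_Ioi_rpow_of_lt hγ one_pos, Real.one_rpow]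

lemma ofReal_min_eq_lintegral_indicator (u w : ℝ) :
    ENNReal.ofReal (min u w) = ∫⁻ d in Ioo 0 w, (Iio u).indicator 1 d := by
  rw [lintegral_indicator_one measurableSet_Iio, Measure.restrict_apply measurableSet_Iio,
    Iio_inter_Ioo, Real.volume_Ioo, sub_zero, min_comm]

lemma le_rpow_div_of_rpow_le {u v p q : ℝ} (hu : 0 ≤ u) (hv : 0 ≤ v) (hq : 0 < q)
    (h : u ^ q ≤ v ^ p) : u ≤ v ^ (p / q) := by
  rwa [div_eq_mul_inv, Real.rpow_mul hv, Real.le_rpow_inv_iff_of_pos hu (by positivity) hq]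

lemma one_lt_of_mul_le_one {p q α : ℝ} (hq : 0 < q) (hpq : 1 / p + 1 / q ≤ 1 + α)
    (hpq' : 1 / p + 1 / q = 1 + α → p ≠ 1) (hqα : q * α ≤ 1) (hp : 1 ≤ p) : 1 < p := by
  refine lt_of_le_of_ne hp fun hp1 => hpq' (le_antisymm hpq ?_) hp1.symm
  rw [← hp1, div_one, add_le_add_iff_left, le_div_iff₀ hq, mul_comm]
  exact hqα

lemma exists_exponent_lt_inv {p q α : ℝ} (hp : 1 < p) (hq : 0 < q) (hα : 0 < α)
    (hpq : 1 / p + 1 / q ≤ 1 + α) :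
    ∃ α', 0 < α' ∧ α' ≤ α ∧ q * α' < 1 ∧ 1 / p + 1 / q ≤ 1 + α' := by
  have h1p : 1 / p < 1 := by rw [div_lt_one (by linarith)]; exact hp
  have h1q : 0 < 1 / q := by positivity
  set m := (max 0 (1 / p + 1 / q - 1) + 1 / q) / 2 with hm
  have hm0 : 0 < m := by have := le_max_left 0 (1 / p + 1 / q - 1); positivity
  have hmq : m < 1 / q := by
    have : max 0 (1 / p + 1 / q - 1) < 1 / q := max_lt h1q (by linarith)
    linarith [hm]
  have hml : 1 / p + 1 / q - 1 ≤ m := by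
    have := le_max_right 0 (1 / p + 1 / q - 1); linarith [hm]
  refine ⟨min α m, lt_min hα hm0, min_le_left _ _, ?_, ?_⟩
  · calc q * min α m ≤ q * m := by gcongr; exact min_le_right _ _
      _ < q * (1 / q) := by gcongr
      _ = 1 := by field_simp
  · linarith [le_min (by linarith : 1 / p + 1 / q - 1 ≤ α) hml]

section

variable {X : Type*} [MeasurableSpace X] {μ : Measure X} {f g : X → ℝ} {p q α : ℝ}

lemma MeasureTheory.MemLp.lintegral_ofReal_abs_rpow_lt_top [IsFiniteMeasure μ]
    (hf : MemLp f (ENNReal.ofReal p) μ) {t : ℝ} (ht : 0 < t) (htp : t ≤ p) :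
    ∫⁻ x, ENNReal.ofReal (|f x| ^ t) ∂μ < ∞ := by
  have h := (hf.mono_exponent (ENNReal.ofReal_le_ofReal htp)).integrable_norm_rpow'
  simp only [ENNReal.toReal_ofReal ht.le, Real.norm_eq_abs] at h
  exact h.lintegral_lt_top

lemma meas_lt_abs_le_rpow_mul_lintegral (hg : AEMeasurable g μ) (hq : 0 < q) {d : ℝ}
    (hd : 0 < d) :
    μ {s | d < |g s|} ≤ ENNReal.ofReal (d ^ (-q)) * ∫⁻ s, ENNReal.ofReal (|g s| ^ q) ∂μ := by
  have hdq : 0 < d ^ q := Real.rpow_pos_of_pos hd q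
  calc μ {s | d < |g s|}
      ≤ μ {s | ENNReal.ofReal (d ^ q) ≤ ENNReal.ofReal (|g s| ^ q)} :=
        measure_mono fun s hs =>
          ENNReal.ofReal_le_ofReal (Real.rpow_le_rpow hd.le (le_of_lt hs) hq.le)
    _ ≤ (∫⁻ s, ENNReal.ofReal (|g s| ^ q) ∂μ) / ENNReal.ofReal (d ^ q) :=
        meas_ge_le_lintegral_div (by fun_prop) (by simpa using hdq) ENNReal.ofReal_ne_top
    _ = ENNReal.ofReal (d ^ (-q)) * ∫⁻ s, ENNReal.ofReal (|g s| ^ q) ∂μ := by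
        rw [ENNReal.div_eq_inv_mul, ← ENNReal.ofReal_inv_of_pos hdq, Real.rpow_neg hd.le]

lemma lintegral_ofReal_min_mul [SFinite μ] {h : X → ℝ} (hh : Measurable h)
    {k : X → ℝ≥0∞} (hk : Measurable k) (w : ℝ) :
    ∫⁻ s, ENNReal.ofReal (min (h s) w) * k s ∂μ
      = ∫⁻ d in Ioo 0 w, ∫⁻ s in {s | d < h s}, k s ∂μ := by
  have hmeas : Measurable fun z : X × ℝ => {s | z.2 < h s}.indicator k z.1 := by
    simp only [indicator_apply, mem_ofPred_eq]
    exact Measurable.ite (measurableSet_lt measurable_snd (hh.comp measurable_fst))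
      (hk.comp measurable_fst) measurable_const
  calc ∫⁻ s, ENNReal.ofReal (min (h s) w) * k s ∂μ
      = ∫⁻ s, (∫⁻ d in Ioo (0 : ℝ) w, {s | d < h s}.indicator k s) ∂μ := by
        refine lintegral_congr fun s => ?_
        rw [ofReal_min_eq_lintegral_indicator,
          ← lintegral_mul_const _ (measurable_one.indicator measurableSet_Iio)]
        congr 1 with d
        by_cases hd : d < h s <;> simp [hd]
    _ = ∫⁻ d in Ioo 0 w, ∫⁻ s in {s | d < h s}, k s ∂μ := by
        rw [lintegral_lintegral_swap hmeas.aemeasurable]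
        refine lintegral_congr fun d => ?_
        exact lintegral_indicator (measurableSet_lt measurable_const hh) k

lemma lintegral_Ioi_meas_lt_abs_rpow_lt_top [IsFiniteMeasure μ] (hg : AEMeasurable g μ)
    (hq : 0 < q) (hα : 0 < α) (hqα : 1 < q * α) (hY : ∫⁻ s, ENNReal.ofReal (|g s| ^ q) ∂μ < ∞) :
    ∫⁻ d in Ioi 0, μ {s | d < |g s|} ^ α < ∞ := by
  set Y := ∫⁻ s, ENNReal.ofReal (|g s| ^ q) ∂μ
  rw [← Ioc_union_Ioi_eq_Ioi zero_le_one,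
    lintegral_union measurableSet_Ioi (Ioc_disjoint_Ioi le_rfl)]
  refine ENNReal.add_lt_top.2 ⟨?_, ?_⟩
  · calc ∫⁻ d in Ioc 0 1, μ {s | d < |g s|} ^ α
        ≤ ∫⁻ _ in Ioc (0 : ℝ) 1, μ univ ^ α :=
          setLIntegral_mono measurable_const fun d _ =>
            ENNReal.rpow_le_rpow (measure_mono (subset_univ _)) hα.le
      _ < ∞ := by
          rw [setLIntegral_const, Real.volume_Ioc]
          exact ENNReal.mul_lt_top (by finiteness) ENNReal.ofReal_lt_top
  · calc ∫⁻ d in Ioi 1, μ {s | d < |g s|} ^ α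
        ≤ ∫⁻ d in Ioi 1, Y ^ α * ENNReal.ofReal (d ^ (-(q * α))) := by
          refine setLIntegral_mono (by fun_prop) fun d (hd : 1 < d) => ?_
          have hd0 : 0 < d := by linarith
          calc μ {s | d < |g s|} ^ α ≤ (ENNReal.ofReal (d ^ (-q)) * Y) ^ α :=
                ENNReal.rpow_le_rpow (meas_lt_abs_le_rpow_mul_lintegral hg hq hd0) hα.le
            _ = Y ^ α * ENNReal.ofReal (d ^ (-(q * α))) := by
                rw [ENNReal.mul_rpow_of_nonneg _ _ hα.le, ENNReal.ofReal_rpow_of_nonneg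
                  (by positivity) hα.le, ← Real.rpow_mul hd0.le, neg_mul, mul_comm]
      _ < ∞ := by
          rw [lintegral_const_mul _ (by fun_prop), lintegral_Ioi_ofReal_rpow (by linarith)]
          exact ENNReal.mul_lt_top (ENNReal.rpow_lt_top_of_nonneg hα.le hY.ne)
            ENNReal.ofReal_lt_top

lemma lintegral_Ioo_meas_lt_abs_rpow_le (hg : AEMeasurable g μ) (hq : 0 < q) {α' : ℝ}
    (hα' : 0 < α') (hα'α : α' ≤ α) (hqα' : q * α' < 1) {w : ℝ} (hw : 0 ≤ w) :
    ∫⁻ d in Ioo 0 w, μ {s | d < |g s|} ^ α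
      ≤ μ univ ^ (α - α') * (∫⁻ s, ENNReal.ofReal (|g s| ^ q) ∂μ) ^ α'
        * ENNReal.ofReal (w ^ (1 - q * α') / (1 - q * α')) := by
  set Y := ∫⁻ s, ENNReal.ofReal (|g s| ^ q) ∂μ
  have hpt : ∀ d ∈ Ioo 0 w, μ {s | d < |g s|} ^ α
      ≤ μ univ ^ (α - α') * Y ^ α' * ENNReal.ofReal (d ^ (-(q * α'))) := by
    intro d hd
    calc μ {s | d < |g s|} ^ α = μ {s | d < |g s|} ^ (α - α') * μ {s | d < |g s|} ^ α' := by
          rw [← ENNReal.rpow_add_of_nonneg _ _ (by linarith) hα'.le, sub_add_cancel]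
      _ ≤ μ univ ^ (α - α') * (ENNReal.ofReal (d ^ (-q)) * Y) ^ α' :=
          mul_le_mul' (ENNReal.rpow_le_rpow (measure_mono (subset_univ _)) (by linarith))
            (ENNReal.rpow_le_rpow (meas_lt_abs_le_rpow_mul_lintegral hg hq hd.1) hα'.le)
      _ = μ univ ^ (α - α') * Y ^ α' * ENNReal.ofReal (d ^ (-(q * α'))) := by
          rw [ENNReal.mul_rpow_of_nonneg _ _ hα'.le, ENNReal.ofReal_rpow_of_nonneg
            (by positivity [hd.1]) hα'.le, ← Real.rpow_mul hd.1.le, neg_mul, mul_assoc,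
            mul_comm (ENNReal.ofReal _)]
  calc ∫⁻ d in Ioo 0 w, μ {s | d < |g s|} ^ α
      ≤ ∫⁻ d in Ioo 0 w, μ univ ^ (α - α') * Y ^ α' * ENNReal.ofReal (d ^ (-(q * α'))) :=
        setLIntegral_mono (by fun_prop) hpt
    _ = μ univ ^ (α - α') * Y ^ α' * ENNReal.ofReal (w ^ (1 - q * α') / (1 - q * α')) := by
        rw [lintegral_const_mul _ (by fun_prop), lintegral_Ioo_ofReal_rpow (by linarith) hw,
          neg_add_eq_sub]

lemma lintegral_enorm_mul_layer_lt_top_of_one_lt_mul [IsFiniteMeasure μ] (hα : 0 < α)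
    (hp : 1 ≤ p) (hq : 0 < q) (hqα : 1 < q * α) (hf : MemLp f (ENNReal.ofReal p) μ)
    (hg : MemLp g (ENNReal.ofReal q) μ) :
    ∫⁻ x, ‖f x‖ₑ * (∫⁻ d in Ioo 0 (|f x| ^ (p / q)), μ {s | d < |g s|} ^ α) ∂μ < ∞ := by
  set M := ∫⁻ d in Ioi 0, μ {s | d < |g s|} ^ α
  have hM : M < ∞ := lintegral_Ioi_meas_lt_abs_rpow_lt_top hg.aestronglyMeasurable.aemeasurable
    hq hα hqα (hg.lintegral_ofReal_abs_rpow_lt_top hq le_rfl)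
  have hF : ∫⁻ x, ‖f x‖ₑ ∂μ < ∞ := by
    simpa [Real.enorm_eq_ofReal_abs] using hf.lintegral_ofReal_abs_rpow_lt_top one_pos hp
  calc ∫⁻ x, ‖f x‖ₑ * (∫⁻ d in Ioo 0 (|f x| ^ (p / q)), μ {s | d < |g s|} ^ α) ∂μ
      ≤ ∫⁻ x, ‖f x‖ₑ * M ∂μ :=
        lintegral_mono fun x => mul_le_mul_right (lintegral_mono_set Ioo_subset_Ioi_self) _
    _ < ∞ := by
        rw [lintegral_mul_const' _ _ hM.ne]
        exact ENNReal.mul_lt_top hF hM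

lemma lintegral_enorm_mul_layer_lt_top_of_mul_lt_one [IsFiniteMeasure μ] (hp : 0 < p)
    (hq : 0 < q) {α' : ℝ} (hα' : 0 < α') (hα'α : α' ≤ α) (hqα' : q * α' < 1)
    (hpq : 1 / p + 1 / q ≤ 1 + α') (hf : MemLp f (ENNReal.ofReal p) μ)
    (hg : MemLp g (ENNReal.ofReal q) μ) :
    ∫⁻ x, ‖f x‖ₑ * (∫⁻ d in Ioo 0 (|f x| ^ (p / q)), μ {s | d < |g s|} ^ α) ∂μ < ∞ := by
  set e := p / q * (1 - q * α')
  have he : 0 ≤ e := mul_nonneg (by positivity) (by linarith)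
  have hep : 1 + e ≤ p := by
    have h := mul_le_mul_of_nonneg_left hpq hp.le
    have h1 : p * (1 / p + 1 / q) = 1 + p / q := by field_simp
    have h2 : e = p / q - p * α' := by simp only [e]; field_simp
    nlinarith
  set M := μ univ ^ (α - α') * (∫⁻ s, ENNReal.ofReal (|g s| ^ q) ∂μ) ^ α'
    * ENNReal.ofReal (1 / (1 - q * α'))
  have hM : M < ∞ := by
    have := hg.lintegral_ofReal_abs_rpow_lt_top hq le_rfl
    finiteness
  have hpt : ∀ x, ‖f x‖ₑ * ∫⁻ d in Ioo 0 (|f x| ^ (p / q)), μ {s | d < |g s|} ^ α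
      ≤ M * ENNReal.ofReal (|f x| ^ (1 + e)) := by
    intro x
    refine (mul_le_mul_right (lintegral_Ioo_meas_lt_abs_rpow_le
      hg.aestronglyMeasurable.aemeasurable hq hα' hα'α hqα' (by positivity)) _).trans_eq ?_
    rw [← Real.rpow_mul (abs_nonneg _), Real.enorm_eq_ofReal_abs, div_eq_mul_one_div _ (1 - _),
      ENNReal.ofReal_mul (by positivity), Real.rpow_add' (abs_nonneg _) (by linarith),
      Real.rpow_one, ENNReal.ofReal_mul (abs_nonneg _)]
    ring
  calc ∫⁻ x, ‖f x‖ₑ * (∫⁻ d in Ioo 0 (|f x| ^ (p / q)), μ {s | d < |g s|} ^ α) ∂μ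
      ≤ ∫⁻ x, M * ENNReal.ofReal (|f x| ^ (1 + e)) ∂μ := lintegral_mono hpt
    _ < ∞ := by
        rw [lintegral_const_mul' _ _ hM.ne]
        exact ENNReal.mul_lt_top hM (hf.lintegral_ofReal_abs_rpow_lt_top (by linarith) hep)

lemma lintegral_enorm_mul_layer_lt_top [IsFiniteMeasure μ] (hα : 0 < α) (hp : 1 ≤ p)
    (hq : 1 ≤ q) (hpq : 1 / p + 1 / q ≤ 1 + α) (hqα : q * α ≤ 1 → 1 < p)
    (hf : MemLp f (ENNReal.ofReal p) μ) (hg : MemLp g (ENNReal.ofReal q) μ) :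
    ∫⁻ x, ‖f x‖ₑ * (∫⁻ d in Ioo 0 (|f x| ^ (p / q)), μ {s | d < |g s|} ^ α) ∂μ < ∞ := by
  rcases lt_or_ge 1 (q * α) with hqα' | hqα'
  · exact lintegral_enorm_mul_layer_lt_top_of_one_lt_mul hα hp (by linarith) hqα' hf hg
  obtain ⟨α', hα', hα'α, hqα'', hpq'⟩ := exists_exponent_lt_inv (hqα hqα') (by linarith) hα hpq
  exact lintegral_enorm_mul_layer_lt_top_of_mul_lt_one (by linarith) (by linarith) hα' hα'α
    hqα'' hpq' hf hg

lemma setLIntegral_abs_le_enorm_mul_le [SFinite μ] (hg : Measurable g) {K : X → ℝ≥0∞}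
    (hK : Measurable K) {C : ℝ≥0∞} (hC : C ≠ ∞) (hKC : ∀ B, ∫⁻ s in B, K s ∂μ ≤ C * μ B ^ α)
    (w : ℝ) :
    ∫⁻ s in {s | |g s| ≤ w}, ‖g s‖ₑ * K s ∂μ
      ≤ C * ∫⁻ d in Ioo 0 w, μ {s | d < |g s|} ^ α := by
  calc ∫⁻ s in {s | |g s| ≤ w}, ‖g s‖ₑ * K s ∂μ
      ≤ ∫⁻ s, ENNReal.ofReal (min |g s| w) * K s ∂μ := by
        rw [← lintegral_indicator (measurableSet_le (by fun_prop) measurable_const)]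
        refine lintegral_mono fun s => ?_
        by_cases h : |g s| ≤ w
        · rw [indicator_of_mem (show s ∈ {s | |g s| ≤ w} from h), min_eq_left h,
            Real.enorm_eq_ofReal_abs]
        · rw [indicator_of_notMem (show s ∉ {s | |g s| ≤ w} from h)]
          exact zero_le
    _ = ∫⁻ d in Ioo 0 w, ∫⁻ s in {s | d < |g s|}, K s ∂μ := lintegral_ofReal_min_mul hg.abs hK w
    _ ≤ ∫⁻ d in Ioo 0 w, C * μ {s | d < |g s|} ^ α := lintegral_mono fun d => hKC _
    _ = C * ∫⁻ d in Ioo 0 w, μ {s | d < |g s|} ^ α := lintegral_const_mul' _ _ hC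

lemma lintegral_indicator_rpow_le_lt_top [IsFiniteMeasure μ] (hf : Measurable f)
    (hg : Measurable g) {K : X × X → ℝ≥0∞} (hK : Measurable K) {C : ℝ≥0∞} (hC : C ≠ ∞)
    (hKC : ∀ x B, ∫⁻ s in B, K (x, s) ∂μ ≤ C * μ B ^ α) (hα : 0 < α) (hp : 1 ≤ p)
    (hq : 1 ≤ q) (hpq : 1 / p + 1 / q ≤ 1 + α) (hqα : q * α ≤ 1 → 1 < p)
    (hfp : MemLp f (ENNReal.ofReal p) μ) (hgq : MemLp g (ENNReal.ofReal q) μ) :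
    ∫⁻ z, {z : X × X | |g z.2| ^ q ≤ |f z.1| ^ p}.indicator
      (fun z => ‖f z.1‖ₑ * ‖g z.2‖ₑ * K z) z ∂μ.prod μ < ∞ := by
  have hmeas : Measurable ({z : X × X | |g z.2| ^ q ≤ |f z.1| ^ p}.indicator
      (fun z => ‖f z.1‖ₑ * ‖g z.2‖ₑ * K z)) :=
    (by fun_prop : Measurable _).indicator (measurableSet_le (by fun_prop) (by fun_prop))
  rw [lintegral_prod _ hmeas.aemeasurable]
  calc ∫⁻ x, ∫⁻ s, {z : X × X | |g z.2| ^ q ≤ |f z.1| ^ p}.indicator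
        (fun z => ‖f z.1‖ₑ * ‖g z.2‖ₑ * K z) (x, s) ∂μ ∂μ
      ≤ ∫⁻ x, ‖f x‖ₑ * ∫⁻ s in {s | |g s| ≤ |f x| ^ (p / q)}, ‖g s‖ₑ * K (x, s) ∂μ ∂μ := by
        refine lintegral_mono fun x => ?_
        rw [← lintegral_const_mul' _ _ enorm_ne_top,
          ← lintegral_indicator (measurableSet_le (by fun_prop) measurable_const)]
        refine lintegral_mono fun s => ?_
        by_cases h : |g s| ^ q ≤ |f x| ^ p
        · rw [indicator_of_mem (show (x, s) ∈ _ from h), indicator_of_mem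
            (show s ∈ {s | |g s| ≤ |f x| ^ (p / q)} from
              le_rpow_div_of_rpow_le (abs_nonneg _) (abs_nonneg _) (by linarith) h), mul_assoc]
        · rw [indicator_of_notMem (show (x, s) ∉ _ from h)]
          exact zero_le
    _ ≤ ∫⁻ x, C * (‖f x‖ₑ * ∫⁻ d in Ioo 0 (|f x| ^ (p / q)), μ {s | d < |g s|} ^ α) ∂μ := by
        refine lintegral_mono fun x => ?_
        rw [mul_left_comm]
        gcongr
        exact setLIntegral_abs_le_enorm_mul_le hg (by fun_prop) hC (hKC x) _
    _ < ∞ := by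
        rw [lintegral_const_mul' _ _ hC]
        exact ENNReal.mul_lt_top hC.lt_top
          (lintegral_enorm_mul_layer_lt_top hα hp hq hpq hqα hfp hgq)

lemma lintegral_enorm_mul_mul_lt_top [IsFiniteMeasure μ] {k : X × X → ℝ} (hk : Measurable k)
    {C : ℝ≥0∞} (hC : C ≠ ∞) (hrow : ∀ x B, ∫⁻ s in B, ‖k (x, s)‖ₑ ∂μ ≤ C * μ B ^ α)
    (hcol : ∀ s B, ∫⁻ x in B, ‖k (x, s)‖ₑ ∂μ ≤ C * μ B ^ α) (hα : 0 < α) (hp : 1 ≤ p)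
    (hq : 1 ≤ q) (hpq : 1 / p + 1 / q ≤ 1 + α) (hqα : q * α ≤ 1 → 1 < p)
    (hpα : p * α ≤ 1 → 1 < q) (hf : Measurable f) (hg : Measurable g)
    (hfp : MemLp f (ENNReal.ofReal p) μ) (hgq : MemLp g (ENNReal.ofReal q) μ) :
    ∫⁻ z, ‖f z.1‖ₑ * ‖g z.2‖ₑ * ‖k z‖ₑ ∂μ.prod μ < ∞ := by
  set A := {z : X × X | |g z.2| ^ q ≤ |f z.1| ^ p}
  set A' := {z : X × X | |f z.2| ^ p ≤ |g z.1| ^ q}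
  set Ψ' : X × X → ℝ≥0∞ := fun z => ‖g z.1‖ₑ * ‖f z.2‖ₑ * ‖k z.swap‖ₑ
  -- `A'` and `Ψ'` are `A` and the integrand with `(f, p)` and `(g, q)` exchanged.
  have hsplit : ∀ z, ‖f z.1‖ₑ * ‖g z.2‖ₑ * ‖k z‖ₑ
      ≤ A.indicator (fun z => ‖f z.1‖ₑ * ‖g z.2‖ₑ * ‖k z‖ₑ) z + A'.indicator Ψ' z.swap := by
    intro z
    rcases le_total (|g z.2| ^ q) (|f z.1| ^ p) with h | h
    · rw [indicator_of_mem (show z ∈ A from h)]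
      exact le_self_add
    · rw [indicator_of_mem (show z.swap ∈ A' from h)]
      refine le_of_eq_of_le ?_ le_add_self
      simp only [Ψ', Prod.fst_swap, Prod.snd_swap, Prod.swap_swap]
      ring
  calc ∫⁻ z, ‖f z.1‖ₑ * ‖g z.2‖ₑ * ‖k z‖ₑ ∂μ.prod μ
      ≤ ∫⁻ z, A.indicator (fun z => ‖f z.1‖ₑ * ‖g z.2‖ₑ * ‖k z‖ₑ) z ∂μ.prod μ
        + ∫⁻ z, A'.indicator Ψ' z.swap ∂μ.prod μ := by
        rw [← lintegral_add_left ((by fun_prop : Measurable _).indicator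
          (measurableSet_le (by fun_prop) (by fun_prop)))]
        exact lintegral_mono hsplit
    _ < ∞ := by
        rw [lintegral_prod_swap]
        exact ENNReal.add_lt_top.2
          ⟨lintegral_indicator_rpow_le_lt_top hf hg (by fun_prop) hC hrow hα hp hq hpq hqα hfp hgq,
           lintegral_indicator_rpow_le_lt_top hg hf (by fun_prop) hC hcol hα hq hp
            (by rwa [add_comm]) hpα hgq hfp⟩

theorem integrable_mul_mul_of_setLIntegral_le [IsFiniteMeasure μ] {k : X × X → ℝ}
    (hk : Measurable k) {C : ℝ≥0∞} (hC : C ≠ ∞)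
    (hrow : ∀ x B, ∫⁻ s in B, ‖k (x, s)‖ₑ ∂μ ≤ C * μ B ^ α)
    (hcol : ∀ s B, ∫⁻ x in B, ‖k (x, s)‖ₑ ∂μ ≤ C * μ B ^ α) (hα : 0 < α) (hp : 1 ≤ p)
    (hq : 1 ≤ q) (hpq : 1 / p + 1 / q ≤ 1 + α)
    (hpq' : 1 / p + 1 / q = 1 + α → p ≠ 1 ∧ q ≠ 1)
    (hf : MemLp f (ENNReal.ofReal p) μ) (hg : MemLp g (ENNReal.ofReal q) μ) :
    Integrable (fun z : X × X => f z.1 * g z.2 * k z) (μ.prod μ) := by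
  wlog hfg : Measurable f ∧ Measurable g generalizing f g
  · refine (this (hf.ae_eq hf.1.ae_eq_mk) (hg.ae_eq hg.1.ae_eq_mk)
      ⟨hf.1.stronglyMeasurable_mk.measurable, hg.1.stronglyMeasurable_mk.measurable⟩).congr ?_
    filter_upwards [Measure.quasiMeasurePreserving_fst.ae_eq hf.1.ae_eq_mk,
      Measure.quasiMeasurePreserving_snd.ae_eq hg.1.ae_eq_mk] with z hfz hgz
    simp only [Function.comp_apply] at hfz hgz
    rw [hfz, hgz]
  have hqα : q * α ≤ 1 → 1 < p := fun h =>
    one_lt_of_mul_le_one (by linarith) hpq (fun h' => (hpq' h').1) h hp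
  have hpα : p * α ≤ 1 → 1 < q := fun h =>
    one_lt_of_mul_le_one (by linarith) (by rwa [add_comm])
      (fun h' => (hpq' (by rwa [add_comm])).2) h hq
  refine ⟨(hfg.1.comp measurable_fst |>.mul (hfg.2.comp measurable_snd) |>.mul hk)
    |>.aestronglyMeasurable, ?_⟩
  simpa only [HasFiniteIntegral, enorm_mul] using lintegral_enorm_mul_mul_lt_top hk hC hrow hcol
    hα hp hq hpq hqα hpα hfg.1 hfg.2 hf hg

end

-- `t₊ ^ (α - 1)`; the `if` keeps `Real.rpow` away from its values at negative bases.
noncomputable def rlKernel (α t : ℝ) : ℝ := if 0 < t then t ^ (α - 1) else 0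

lemma measurable_rlKernel (α : ℝ) : Measurable (rlKernel α) :=
  Measurable.ite measurableSet_Ioi (by fun_prop) measurable_const

lemma enorm_rlKernel_le_add_indicator {α r : ℝ} (hα : α ≤ 1) (hr : 0 < r) (t : ℝ) :
    ‖rlKernel α t‖ₑ ≤ ENNReal.ofReal (r ^ (α - 1))
      + (Ioo 0 r).indicator (fun t => ENNReal.ofReal (t ^ (α - 1))) t := by
  unfold rlKernel
  split_ifs with ht
  · rw [Real.enorm_eq_ofReal (by positivity)]
    rcases lt_or_ge t r with htr | htr
    · rw [indicator_of_mem (show t ∈ Ioo 0 r from ⟨ht, htr⟩)]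
      exact le_add_self
    · rw [indicator_of_notMem fun h => (not_lt.2 htr) h.2, add_zero]
      exact ENNReal.ofReal_le_ofReal (Real.rpow_le_rpow_of_nonpos hr htr (by linarith))
  · simp

lemma setLIntegral_enorm_rlKernel_comp_le {α : ℝ} (hα0 : 0 < α) (hα1 : α ≤ 1) {e : ℝ → ℝ}
    (he : MeasurePreserving e) (B : Set ℝ) :
    ∫⁻ s in B, ‖rlKernel α (e s)‖ₑ ≤ ENNReal.ofReal (1 + 1 / α) * volume B ^ α := by
  rcases eq_or_ne (volume B) 0 with h0 | h0
  · simp [Measure.restrict_eq_zero.2 h0]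
  rcases eq_or_ne (volume B) ∞ with htop | htop
  · rw [htop, ENNReal.top_rpow_of_pos hα0, ENNReal.mul_top (by simp; positivity)]
    exact le_top
  set r := (volume B).toReal
  have hr : 0 < r := ENNReal.toReal_pos h0 htop
  have hB : volume B = ENNReal.ofReal r := (ENNReal.ofReal_toReal htop).symm
  set φ := (Ioo 0 r).indicator fun t => ENNReal.ofReal (t ^ (α - 1))
  have hφ : Measurable φ := (by fun_prop : Measurable _).indicator measurableSet_Ioo
  calc ∫⁻ s in B, ‖rlKernel α (e s)‖ₑ
      ≤ ∫⁻ s in B, (ENNReal.ofReal (r ^ (α - 1)) + φ (e s)) :=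
        lintegral_mono fun s => enorm_rlKernel_le_add_indicator hα1 hr _
    _ ≤ ENNReal.ofReal (r ^ (α - 1)) * volume B + ∫⁻ s, φ (e s) := by
        rw [lintegral_add_left measurable_const, setLIntegral_const]
        exact add_le_add le_rfl (setLIntegral_le_lintegral _ _)
    _ = ENNReal.ofReal (r ^ (α - 1)) * volume B + ENNReal.ofReal (r ^ α / α) := by
        rw [he.lintegral_comp hφ, lintegral_indicator measurableSet_Ioo,
          lintegral_Ioo_ofReal_rpow (by linarith) hr.le, sub_add_cancel]
    _ = ENNReal.ofReal (1 + 1 / α) * volume B ^ α := by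
        rw [hB, ENNReal.ofReal_rpow_of_pos hr, ← ENNReal.ofReal_mul (by positivity),
          ← ENNReal.ofReal_add (by positivity) (by positivity),
          ← ENNReal.ofReal_mul (by positivity), ← Real.rpow_add_one hr.ne']
        congr 1
        field_simp
        rw [sub_add_cancel]
        ring

lemma abs_rlKernel_le_rpow {α t c : ℝ} (hα : 1 ≤ α) (htc : t ≤ c) (hc : 0 ≤ c) :
    |rlKernel α t| ≤ c ^ (α - 1) := by
  unfold rlKernel
  split_ifs with ht
  · rw [abs_of_nonneg (by positivity)]
    exact Real.rpow_le_rpow ht.le htc (by linarith)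
  · simpa using Real.rpow_nonneg hc _

theorem integrable_mul_mul_rlKernel {a b α p q : ℝ} {f g : ℝ → ℝ} (hα : 0 < α) (hp : 1 ≤ p)
    (hq : 1 ≤ q) (hpq : 1 / p + 1 / q ≤ 1 + α)
    (hpq' : 1 / p + 1 / q = 1 + α → p ≠ 1 ∧ q ≠ 1)
    (hf : MemLp f (ENNReal.ofReal p) (volume.restrict (Ioo a b)))
    (hg : MemLp g (ENNReal.ofReal q) (volume.restrict (Ioo a b))) :
    Integrable (fun z : ℝ × ℝ => f z.1 * g z.2 * rlKernel α (z.1 - z.2))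
      ((volume.restrict (Ioo a b)).prod (volume.restrict (Ioo a b))) := by
  have hk : Measurable fun z : ℝ × ℝ => rlKernel α (z.1 - z.2) :=
    (measurable_rlKernel α).comp (measurable_fst.sub measurable_snd)
  rcases lt_or_ge α 1 with hα1 | hα1
  · refine integrable_mul_mul_of_setLIntegral_le hk (ENNReal.ofReal_ne_top (r := 1 + 1 / α))
      (fun x B => ?_) (fun s B => ?_) hα hp hq hpq hpq' hf hg
    · rw [Measure.restrict_restrict' measurableSet_Ioo, Measure.restrict_apply' measurableSet_Ioo]
      exact setLIntegral_enorm_rlKernel_comp_le hα hα1.le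
        (Measure.measurePreserving_sub_left volume x) _
    · rw [Measure.restrict_restrict' measurableSet_Ioo, Measure.restrict_apply' measurableSet_Ioo]
      exact setLIntegral_enorm_rlKernel_comp_le hα hα1.le
        (measurePreserving_sub_right volume s) _
  have h1p : 1 ≤ ENNReal.ofReal p := by simpa using ENNReal.ofReal_le_ofReal hp
  have h1q : 1 ≤ ENNReal.ofReal q := by simpa using ENNReal.ofReal_le_ofReal hq
  refine ((hf.integrable h1p).mul_prod (hg.integrable h1q)).mul_bdd (c := (b - a) ^ (α - 1))
    hk.aestronglyMeasurable ?_
  rw [Measure.prod_restrict]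
  filter_upwards [ae_restrict_mem (measurableSet_Ioo.prod measurableSet_Ioo)] with z hz
  exact abs_rlKernel_le_rpow hα1 (by linarith [hz.1.2, hz.2.1]) (by linarith [hz.1.1, hz.1.2])

lemma rlIL_one_eq_setIntegral {a b α x : ℝ} (hax : a ≤ x) (hxb : x ≤ b) (g : ℝ → ℝ) :
    rlIL a (fun _ => 1) α g x
      = (Real.Gamma α)⁻¹ * ∫ s in Ioo a b, g s * rlKernel α (x - s) := by
  have hind : (fun s => g s * rlKernel α (x - s))
      = (Iio x).indicator fun s => (x - s) ^ (α - 1) * g s := by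
    ext s
    simp only [rlKernel, indicator_apply, mem_Iio, sub_pos]
    split_ifs <;> ring
  rw [rlIL, hind, setIntegral_indicator measurableSet_Iio, Ioo_inter_Iio, min_eq_right hxb,
    integral_of_le hax, integral_Ioc_eq_integral_Ioo]
  simp

lemma rlIR_one_eq_setIntegral {a b α x : ℝ} (hax : a ≤ x) (hxb : x ≤ b) (f : ℝ → ℝ) :
    rlIR b (fun _ => 1) α f x
      = (Real.Gamma α)⁻¹ * ∫ s in Ioo a b, f s * rlKernel α (s - x) := by
  have hind : (fun s => f s * rlKernel α (s - x))
      = (Ioi x).indicator fun s => (s - x) ^ (α - 1) * f s := by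
    ext s
    simp only [rlKernel, indicator_apply, mem_Ioi, sub_pos]
    split_ifs <;> ring
  have hset : Ioo a b ∩ Ioi x = Ioo x b := by
    ext s
    simp only [mem_inter_iff, mem_Ioo, mem_Ioi]
    constructor
    · rintro ⟨⟨-, hsb⟩, hxs⟩
      exact ⟨hxs, hsb⟩
    · rintro ⟨hxs, hsb⟩
      exact ⟨⟨by linarith, hsb⟩, hxs⟩
  rw [rlIR, hind, setIntegral_indicator measurableSet_Ioi, hset,
    integral_of_le hxb, integral_Ioc_eq_integral_Ioo]
  simp

lemma integral_mul_rlIL_one {a b α : ℝ} (hab : a ≤ b) (f g : ℝ → ℝ) :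
    ∫ x in a..b, f x * rlIL a (fun _ => 1) α g x
      = (Real.Gamma α)⁻¹ * ∫ x in Ioo a b, ∫ s in Ioo a b, f x * g s * rlKernel α (x - s) := by
  rw [integral_of_le hab, integral_Ioc_eq_integral_Ioo, ← MeasureTheory.integral_const_mul]
  refine setIntegral_congr_fun measurableSet_Ioo fun x hx => ?_
  simp only [rlIL_one_eq_setIntegral hx.1.le hx.2.le, ← MeasureTheory.integral_const_mul]
  congr 1 with y
  ring

lemma integral_mul_rlIR_one {a b α : ℝ} (hab : a ≤ b) (f g : ℝ → ℝ) :
    ∫ s in a..b, g s * rlIR b (fun _ => 1) α f s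
      = (Real.Gamma α)⁻¹ * ∫ s in Ioo a b, ∫ x in Ioo a b, f x * g s * rlKernel α (x - s) := by
  rw [integral_of_le hab, integral_Ioc_eq_integral_Ioo, ← MeasureTheory.integral_const_mul]
  refine setIntegral_congr_fun measurableSet_Ioo fun s hs => ?_
  simp only [rlIR_one_eq_setIntegral hs.1.le hs.2.le, ← MeasureTheory.integral_const_mul]
  congr 1 with y
  ring

/-- Integration by parts for the standard (unweighted, `w ≡ 1`) Riemann–Liouville
fractional integrals of order `α > 0`. -/
theorem rl_integration_by_parts
    (a b α p q : ℝ) (hab : a < b) (hα : 0 < α)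
    (hp : 1 ≤ p) (hq : 1 ≤ q) (hpq : 1 / p + 1 / q ≤ 1 + α)
    (hpq' : 1 / p + 1 / q = 1 + α → p ≠ 1 ∧ q ≠ 1)
    (f g : ℝ → ℝ)
    (hf : MemLp f (ENNReal.ofReal p) (volume.restrict (Ioo a b)))
    (hg : MemLp g (ENNReal.ofReal q) (volume.restrict (Ioo a b))) :
    ∫ x in a..b, f x * rlIL a (fun _ => 1) α g x
      = ∫ x in a..b, g x * rlIR b (fun _ => 1) α f x := by
  rw [integral_mul_rlIL_one hab.le, integral_mul_rlIR_one hab.le,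
    integral_integral_swap (integrable_mul_mul_rlKernel hα hp hq hpq hpq' hf hg)]
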